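/- arXiv:1209.2312 — 4 statements merged into one kernel-verified Lean document; each statement's English description precedes it below -/
import Mathlib

section
/- Let n ≥ 1 and let x ∈ ℝ^n with x ≠ 0. Then in O(1,n+1) one has the decomposition w₀⁻¹ · n̄_x = n̄_y · m · exp(log|x| · H) · n_z, where y = −|x|⁻²x, z = |x|⁻²x, and m is the block diagonal (n+2)×(n+2) matrix with diagonal blocks −1, I_n − 2|x|⁻² x xᵀ, −1. -/
open Matrix

noncomputable section

/-- Embedding of `Fin n` as the middle indices `1,…,n` of `Fin (n+2)`. -/
def idx {n : ℕ} (j : Fin n) : Fin (n + 2) := j.succ.castSucc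

/-- The matrix `N_j = E_{1,j+1} + E_{j+1,1} − E_{j+1,n+2} + E_{n+2,j+1}`. -/
def Nmat (n : ℕ) (j : Fin n) : Matrix (Fin (n + 2)) (Fin (n + 2)) ℝ :=
  Matrix.single 0 (idx j) 1 + Matrix.single (idx j) 0 1
    - Matrix.single (idx j) (Fin.last (n + 1)) 1 + Matrix.single (Fin.last (n + 1)) (idx j) 1

/-- The matrix `N̄_j = E_{1,j+1} + E_{j+1,1} + E_{j+1,n+2} − E_{n+2,j+1}`. -/
def NbarMat (n : ℕ) (j : Fin n) : Matrix (Fin (n + 2)) (Fin (n + 2)) ℝ :=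
  Matrix.single 0 (idx j) 1 + Matrix.single (idx j) 0 1
    + Matrix.single (idx j) (Fin.last (n + 1)) 1 - Matrix.single (Fin.last (n + 1)) (idx j) 1

/-- The matrix `H = 2(E_{1,n+2} + E_{n+2,1})`. -/
def Hmat (n : ℕ) : Matrix (Fin (n + 2)) (Fin (n + 2)) ℝ :=
  2 • (Matrix.single 0 (Fin.last (n + 1)) 1 + Matrix.single (Fin.last (n + 1)) 0 1)

/-- `n_x = exp(Σ_j x_j N_j)`. -/
def nGrp (n : ℕ) (x : Fin n → ℝ) : Matrix (Fin (n + 2)) (Fin (n + 2)) ℝ :=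
  NormedSpace.exp (∑ j, x j • Nmat n j)

/-- `n̄_x = exp(Σ_j x_j N̄_j)`. -/
def nbarGrp (n : ℕ) (x : Fin n → ℝ) : Matrix (Fin (n + 2)) (Fin (n + 2)) ℝ :=
  NormedSpace.exp (∑ j, x j • NbarMat n j)

/-- `w₀ = diag(−1,1,…,1)`. -/
def w0 (n : ℕ) : Matrix (Fin (n + 2)) (Fin (n + 2)) ℝ :=
  diagonal fun i => if i = 0 then -1 else 1

/-- The Euclidean norm on `ℝ^n`. -/
def eunorm {n : ℕ} (x : Fin n → ℝ) : ℝ := Real.sqrt (∑ i, x i ^ 2)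

/-- The block diagonal matrix with diagonal blocks `−1`, `Iₙ − 2|x|⁻² x xᵀ`, `−1`. -/
def mMat (n : ℕ) (x : Fin n → ℝ) : Matrix (Fin (n + 2)) (Fin (n + 2)) ℝ :=
  1 - 2 • Matrix.single (0 : Fin (n + 2)) (0 : Fin (n + 2)) (1 : ℝ)
    - 2 • Matrix.single (Fin.last (n + 1)) (Fin.last (n + 1)) (1 : ℝ)
    - ∑ i, ∑ j, (2 * (eunorm x ^ 2)⁻¹ * x i * x j) • Matrix.single (idx i) (idx j) (1 : ℝ)

/-!
Every factor preserves the subspace `span(e₀, x, e_{n+1})` and fixes its orthogonal complement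
pointwise, so the identity reduces to a product of `3 × 3` matrices in the basis
`(e₀, x, e_{n+1})`. The generators `∑ xⱼ N̄ⱼ` and `∑ xⱼ Nⱼ` cube to zero, so their exponentials
are `1 + A + A² / 2`, and `t • H` is conjugate to `diag(2t, 0, …, 0, -2t)`.
-/

theorem NormedSpace.exp_eq_sum_range_of_pow_eq_zero (𝕂 : Type*) {𝔸 : Type*} [Field 𝕂]
    [CharZero 𝕂] [Ring 𝔸] [Algebra 𝕂 𝔸] [TopologicalSpace 𝔸] [IsTopologicalRing 𝔸] {A : 𝔸}
    {m : ℕ} (h : A ^ m = 0) :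
    NormedSpace.exp A = ∑ k ∈ Finset.range m, (k.factorial⁻¹ : 𝕂) • A ^ k := by
  rw [NormedSpace.exp_eq_tsum 𝕂]
  refine tsum_eq_sum fun k hk => ?_
  rw [Finset.mem_range, not_lt] at hk
  rw [← Nat.add_sub_cancel' hk, pow_add, h, zero_mul, smul_zero]

section Bordered

variable {n : ℕ} {α : Type*}

@[simp] lemma idx_ne_zero (j : Fin n) : idx j ≠ 0 := by simp [idx, Fin.ext_iff]

@[simp] lemma idx_ne_last (j : Fin n) : idx j ≠ Fin.last (n + 1) := by
  simp [idx, Fin.ext_iff]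
  omega

@[simp] lemma zero_ne_idx (j : Fin n) : 0 ≠ idx j := (idx_ne_zero j).symm

@[simp] lemma last_ne_idx (j : Fin n) : Fin.last (n + 1) ≠ idx j := (idx_ne_last j).symm

@[simp] lemma idx_inj {i j : Fin n} : idx i = idx j ↔ i = j := by simp [idx, Fin.ext_iff]

@[elab_as_elim]
lemma idx_induction {P : Fin (n + 2) → Prop} (zero : P 0) (idx : ∀ j, P (idx j))
    (last : P (Fin.last (n + 1))) (i : Fin (n + 2)) : P i := by
  induction i using Fin.cases with
  | zero => exact zero
  | succ k =>
    induction k using Fin.lastCases with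
    | last => exact last
    | cast j => rw [Fin.succ_castSucc]; exact idx j

lemma sum_univ_eq_zero_add_sum_idx_add_last {M : Type*} [AddCommMonoid M]
    (f : Fin (n + 2) → M) : ∑ k, f k = f 0 + ∑ j, f (idx j) + f (Fin.last (n + 1)) := by
  rw [Fin.sum_univ_succ, Fin.sum_univ_castSucc]
  simp only [idx, Fin.succ_castSucc, Fin.succ_last, add_assoc]

def idxCases (first : α) (middle : Fin n → α) (last : α) : Fin (n + 2) → α :=
  Fin.cases first (Fin.lastCases last middle)

section idxCases
variable (first : α) (middle : Fin n → α) (last : α)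

@[simp] lemma idxCases_zero : idxCases first middle last 0 = first := rfl

@[simp] lemma idxCases_last : idxCases first middle last (Fin.last (n + 1)) = last := by
  simp [idxCases, ← Fin.succ_last]

@[simp] lemma idxCases_idx (j : Fin n) : idxCases first middle last (idx j) = middle j := by
  simp [idxCases, idx]

end idxCases

/-- The block matrix `[[a, uᵀ, c], [v, S, p], [d, qᵀ, b]]` for the splitting `1 + n + 1` of the
indices. -/
def bordered (a : α) (u : Fin n → α) (c : α) (v : Fin n → α) (S : Matrix (Fin n) (Fin n) α)
    (p : Fin n → α) (d : α) (q : Fin n → α) (b : α) : Matrix (Fin (n + 2)) (Fin (n + 2)) α :=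
  of <| idxCases (idxCases a u c) (fun k => idxCases (v k) (S k) (p k)) (idxCases d q b)

section entries
variable (a c d b : α) (u v p q : Fin n → α) (S : Matrix (Fin n) (Fin n) α) (k l : Fin n)

@[simp] lemma bordered_zero_zero : bordered a u c v S p d q b 0 0 = a := rfl

@[simp] lemma bordered_zero_idx : bordered a u c v S p d q b 0 (idx l) = u l := by
  simp [bordered]

@[simp] lemma bordered_zero_last : bordered a u c v S p d q b 0 (Fin.last _) = c := by
  simp [bordered]

@[simp] lemma bordered_idx_zero : bordered a u c v S p d q b (idx k) 0 = v k := by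
  simp [bordered]

@[simp] lemma bordered_idx_idx : bordered a u c v S p d q b (idx k) (idx l) = S k l := by
  simp [bordered]

@[simp] lemma bordered_idx_last : bordered a u c v S p d q b (idx k) (Fin.last _) = p k := by
  simp [bordered]

@[simp] lemma bordered_last_zero : bordered a u c v S p d q b (Fin.last _) 0 = d := by
  simp [bordered]

@[simp] lemma bordered_last_idx : bordered a u c v S p d q b (Fin.last _) (idx l) = q l := by
  simp [bordered]

@[simp] lemma bordered_last_last :
    bordered a u c v S p d q b (Fin.last _) (Fin.last _) = b := by
  simp [bordered]

end entries

lemma bordered_mul_bordered [CommSemiring α] (a c d b a' c' d' b' : α)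
    (u v p q u' v' p' q' : Fin n → α) (S S' : Matrix (Fin n) (Fin n) α) :
    bordered a u c v S p d q b * bordered a' u' c' v' S' p' d' q' b' =
      bordered (a * a' + u ⬝ᵥ v' + c * d') (a • u' + u ᵥ* S' + c • q')
        (a * c' + u ⬝ᵥ p' + c * b') (a' • v + S *ᵥ v' + d' • p)
        (vecMulVec v u' + S * S' + vecMulVec p q') (c' • v + S *ᵥ p' + b' • p)
        (d * a' + q ⬝ᵥ v' + b * d') (d • u' + q ᵥ* S' + b • q') (d * c' + q ⬝ᵥ p' + b * b') := by
  ext i j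
  induction i using idx_induction <;> induction j using idx_induction <;>
    simp [mul_apply, sum_univ_eq_zero_add_sum_idx_add_last, dotProduct, vecMul, mulVec,
      vecMulVec_apply] <;> ring

lemma one_eq_bordered [Zero α] [One α] :
    (1 : Matrix (Fin (n + 2)) (Fin (n + 2)) α) = bordered 1 0 0 0 1 0 0 0 1 := by
  ext i j
  induction i using idx_induction <;> induction j using idx_induction <;> simp [one_apply]

lemma diagonal_idxCases [Zero α] (a b : α) (v : Fin n → α) :
    diagonal (idxCases a v b) = bordered a 0 0 0 (diagonal v) 0 0 0 b := by
  ext i j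
  induction i using idx_induction <;> induction j using idx_induction <;> simp [diagonal_apply]

end Bordered

section BorderedForms

variable {n : ℕ}

lemma exp_bordered_of_sq_eq_one {𝕂 : Type*} [Field 𝕂] [CharZero 𝕂] [TopologicalSpace 𝕂]
    [IsTopologicalRing 𝕂] {ε : 𝕂} (hε : ε ^ 2 = 1) (x : Fin n → 𝕂) :
    NormedSpace.exp (bordered 0 x 0 x 0 (ε • x) 0 (-ε • x) 0) =
      bordered (1 + x ⬝ᵥ x / 2) x (ε * (x ⬝ᵥ x) / 2) x 1 (ε • x) (-(ε * (x ⬝ᵥ x) / 2)) (-ε • x)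
        (1 - x ⬝ᵥ x / 2) := by
  set A := bordered 0 x 0 x 0 (ε • x) 0 (-ε • x) 0
  have hA2 : A ^ 2 =
      bordered (x ⬝ᵥ x) 0 (ε * (x ⬝ᵥ x)) 0 0 0 (-(ε * (x ⬝ᵥ x))) 0 (-(x ⬝ᵥ x)) := by
    rw [sq, bordered_mul_bordered]
    ext i j
    induction i using idx_induction <;> induction j using idx_induction <;>
      simp [vecMulVec_apply] <;> grind
  have hA3 : A ^ 3 = 0 := by
    rw [pow_succ, hA2, bordered_mul_bordered]
    ext i j
    induction i using idx_induction <;> induction j using idx_induction <;>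
      simp <;> grind
  rw [NormedSpace.exp_eq_sum_range_of_pow_eq_zero 𝕂 hA3]
  simp only [Finset.sum_range_succ, Finset.range_one, Finset.sum_singleton, Nat.factorial_zero,
    Nat.factorial_one, Nat.factorial_two, Nat.cast_one, Nat.cast_ofNat, inv_one, pow_zero, pow_one,
    one_smul, hA2]
  ext i j
  induction i using idx_induction <;> induction j using idx_induction <;>
    simp [A, one_apply] <;> ring

lemma sum_smul_NbarMat (x : Fin n → ℝ) :
    ∑ j, x j • NbarMat n j = bordered 0 x 0 x 0 x 0 (-x) 0 := by
  ext i j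
  induction i using idx_induction <;> induction j using idx_induction <;>
    simp [NbarMat, Matrix.sum_apply, single_apply]

lemma sum_smul_Nmat (x : Fin n → ℝ) : ∑ j, x j • Nmat n j = bordered 0 x 0 x 0 (-x) 0 x 0 := by
  ext i j
  induction i using idx_induction <;> induction j using idx_induction <;>
    simp [Nmat, Matrix.sum_apply, single_apply]

lemma nbarGrp_eq_bordered (x : Fin n → ℝ) :
    nbarGrp n x =
      bordered (1 + x ⬝ᵥ x / 2) x (x ⬝ᵥ x / 2) x 1 x (-(x ⬝ᵥ x / 2)) (-x) (1 - x ⬝ᵥ x / 2) := by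
  rw [nbarGrp, sum_smul_NbarMat]
  simpa using exp_bordered_of_sq_eq_one (one_pow 2) x

lemma nGrp_eq_bordered (x : Fin n → ℝ) :
    nGrp n x =
      bordered (1 + x ⬝ᵥ x / 2) x (-(x ⬝ᵥ x / 2)) x 1 (-x) (x ⬝ᵥ x / 2) x (1 - x ⬝ᵥ x / 2) := by
  rw [nGrp, sum_smul_Nmat]
  convert exp_bordered_of_sq_eq_one neg_one_sq x using 2 <;> simp <;> ring

lemma smul_Hmat_eq_bordered (t : ℝ) : t • Hmat n = bordered 0 0 (2 * t) 0 0 0 (2 * t) 0 0 := by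
  ext i j
  induction i using idx_induction <;> induction j using idx_induction <;> simp [Hmat, mul_comm]

lemma exp_smul_Hmat (t : ℝ) :
    NormedSpace.exp (t • Hmat n) =
      bordered (Real.cosh (2 * t)) 0 (Real.sinh (2 * t)) 0 1 0 (Real.sinh (2 * t)) 0
        (Real.cosh (2 * t)) := by
  set C : Matrix (Fin (n + 2)) (Fin (n + 2)) ℝ := bordered 1 0 1 0 1 0 1 0 (-1)
  have hC : C * bordered 2⁻¹ 0 2⁻¹ 0 1 0 2⁻¹ 0 (-2⁻¹) = 1 := by
    rw [bordered_mul_bordered, one_eq_bordered]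
    norm_num
  have hC_inv := inv_eq_right_inv hC
  have hdiag : t • Hmat n = C * diagonal (idxCases (2 * t) 0 (-(2 * t))) * C⁻¹ := by
    rw [hC_inv, smul_Hmat_eq_bordered, diagonal_idxCases, bordered_mul_bordered,
      bordered_mul_bordered]
    norm_num
    congr 1 <;> ring
  have hexp : NormedSpace.exp (idxCases (n := n) (2 * t) 0 (-(2 * t))) =
      idxCases (Real.exp (2 * t)) (fun _ => 1) (Real.exp (-(2 * t))) := by
    funext i
    induction i using idx_induction <;> simp [Pi.coe_exp, Real.exp_eq_exp_ℝ]
  rw [hdiag, exp_conj _ _ (IsUnit.of_mul_eq_one _ hC), exp_diagonal, hexp, hC_inv,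
    diagonal_idxCases, diagonal_one]
  simp only [C, bordered_mul_bordered, Real.cosh_eq, Real.sinh_eq, one_mul, mul_one, mul_zero,
    zero_add, add_zero, neg_mul, mul_neg, neg_neg, smul_zero, dotProduct_zero, vecMul_one,
    mulVec_zero, vecMulVec_zero]
  congr 1 <;> ring

lemma w0_eq_bordered : w0 n = bordered (-1) 0 0 0 1 0 0 0 1 := by
  ext i j
  induction i using idx_induction <;> induction j using idx_induction <;>
    simp [w0, one_apply, diagonal_apply]

lemma w0_inv : (w0 n)⁻¹ = w0 n := by
  refine inv_eq_left_inv ?_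
  rw [w0_eq_bordered, bordered_mul_bordered, one_eq_bordered]
  norm_num

lemma mMat_eq_bordered (x : Fin n → ℝ) :
    mMat n x = bordered (-1) 0 0 0 (1 - (2 * (eunorm x ^ 2)⁻¹) • vecMulVec x x) 0 0 0 (-1) := by
  ext i j
  induction i using idx_induction <;> induction j using idx_induction <;>
    simp [mMat, Matrix.sum_apply, single_apply, one_apply, ite_and, vecMulVec_apply] <;> ring

end BorderedForms

section LiftSpan

variable {n : ℕ} {𝕂 : Type*} [Field 𝕂]

/-- For `x ⬝ᵥ x ≠ 0`: the matrix acting on `span(e₀, x, e_{n+1})` by `K`, written in the basis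
`(e₀, x, e_{n+1})`, and as the identity on the orthogonal complement. -/
def liftSpan (x : Fin n → 𝕂) (K : Matrix (Fin 3) (Fin 3) 𝕂) :
    Matrix (Fin (n + 2)) (Fin (n + 2)) 𝕂 :=
  bordered (K 0 0) ((K 0 1 / x ⬝ᵥ x) • x) (K 0 2)
    (K 1 0 • x) (1 + ((K 1 1 - 1) / x ⬝ᵥ x) • vecMulVec x x) (K 1 2 • x)
    (K 2 0) ((K 2 1 / x ⬝ᵥ x) • x) (K 2 2)

lemma liftSpan_mul_liftSpan {x : Fin n → 𝕂} (hx : x ⬝ᵥ x ≠ 0) (K L : Matrix (Fin 3) (Fin 3) 𝕂) :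
    liftSpan x K * liftSpan x L = liftSpan x (K * L) := by
  simp only [liftSpan, bordered_mul_bordered]
  congr 1
  case e_a | e_c | e_d | e_b =>
    simp only [mul_apply, Fin.sum_univ_three, dotProduct_smul, smul_dotProduct, smul_eq_mul]
    field_simp
  case e_u | e_v | e_p | e_q =>
    ext k
    simp only [vecMul_add, vecMul_one, vecMul_smul, vecMul_vecMulVec, add_mulVec, one_mulVec,
      smul_mulVec, vecMulVec_mulVec, MulOpposite.smul_eq_mul_unop, MulOpposite.unop_op,
      dotProduct_smul, smul_dotProduct, smul_eq_mul, Pi.add_apply, Pi.smul_apply, mul_apply,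
      Fin.sum_univ_three]
    field_simp
    ring
  case e_S =>
    ext k l
    simp only [Matrix.add_mul, Matrix.mul_add, Matrix.one_mul, Matrix.mul_one,
      Algebra.mul_smul_comm, Algebra.smul_mul_assoc, vecMulVec_smul, smul_vecMulVec,
      vecMulVec_mul_vecMulVec, smul_add, Matrix.add_apply, Matrix.smul_apply, vecMulVec_apply,
      smul_eq_mul, one_apply, mul_apply, Fin.sum_univ_three]
    field_simp
    ring

end LiftSpan

section Factors

variable {n : ℕ}

lemma eunorm_sq (x : Fin n → ℝ) : eunorm x ^ 2 = x ⬝ᵥ x := by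
  rw [eunorm, Real.sq_sqrt (Finset.sum_nonneg fun i _ => sq_nonneg (x i))]
  simp [dotProduct, sq]

lemma w0_eq_liftSpan (x : Fin n → ℝ) : w0 n = liftSpan x !![-1, 0, 0; 0, 1, 0; 0, 0, 1] := by
  simp [w0_eq_bordered, liftSpan]

lemma mMat_eq_liftSpan (x : Fin n → ℝ) : mMat n x = liftSpan x (-1) := by
  rw [mMat_eq_bordered, liftSpan, eunorm_sq]
  congr 1 <;> simp
  rw [sub_eq_add_neg, ← neg_smul]
  ring_nf

lemma exp_smul_Hmat_eq_liftSpan (x : Fin n → ℝ) (t : ℝ) :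
    NormedSpace.exp (t • Hmat n) = liftSpan x
      !![Real.cosh (2 * t), 0, Real.sinh (2 * t);
        0, 1, 0;
        Real.sinh (2 * t), 0, Real.cosh (2 * t)] := by
  simp [exp_smul_Hmat, liftSpan]

lemma nbarGrp_smul_eq_liftSpan {x : Fin n → ℝ} (hx : x ⬝ᵥ x ≠ 0) (c : ℝ) :
    nbarGrp n (c • x) = liftSpan x
      !![1 + c ^ 2 * (x ⬝ᵥ x) / 2, c * (x ⬝ᵥ x), c ^ 2 * (x ⬝ᵥ x) / 2;
        c, 1, c;
        -(c ^ 2 * (x ⬝ᵥ x) / 2), -(c * (x ⬝ᵥ x)), 1 - c ^ 2 * (x ⬝ᵥ x) / 2] := by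
  rw [nbarGrp_eq_bordered, liftSpan]
  simp [sq, mul_assoc, mul_div_cancel_right₀ _ hx, neg_div, neg_smul]

lemma nGrp_smul_eq_liftSpan {x : Fin n → ℝ} (hx : x ⬝ᵥ x ≠ 0) (c : ℝ) :
    nGrp n (c • x) = liftSpan x
      !![1 + c ^ 2 * (x ⬝ᵥ x) / 2, c * (x ⬝ᵥ x), -(c ^ 2 * (x ⬝ᵥ x) / 2);
        c, 1, -c;
        c ^ 2 * (x ⬝ᵥ x) / 2, c * (x ⬝ᵥ x), 1 - c ^ 2 * (x ⬝ᵥ x) / 2] := by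
  rw [nGrp_eq_bordered, liftSpan]
  simp [sq, mul_assoc, mul_div_cancel_right₀ _ hx, neg_smul]

end Factors

theorem stmt0_general (n : ℕ) (x : Fin n → ℝ) (hx : x ≠ 0) :
    (w0 n)⁻¹ * nbarGrp n x =
      nbarGrp n (-(eunorm x ^ 2)⁻¹ • x) * mMat n x *
        NormedSpace.exp (Real.log (eunorm x) • Hmat n) *
        nGrp n ((eunorm x ^ 2)⁻¹ • x) := by
  have hσ : x ⬝ᵥ x ≠ 0 := dotProduct_self_eq_zero.not.mpr hx
  have hσ_pos : 0 < x ⬝ᵥ x := (eunorm_sq x ▸ sq_nonneg (eunorm x)).lt_of_ne' hσ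
  have hlog : 2 * Real.log (eunorm x) = Real.log (x ⬝ᵥ x) := by
    rw [← eunorm_sq, Real.log_pow, Nat.cast_ofNat]
  have hnbar := nbarGrp_smul_eq_liftSpan hσ 1
  rw [one_smul] at hnbar
  rw [w0_inv, w0_eq_liftSpan x, hnbar, eunorm_sq, nbarGrp_smul_eq_liftSpan hσ, mMat_eq_liftSpan,
    exp_smul_Hmat_eq_liftSpan x, hlog, Real.cosh_log hσ_pos, Real.sinh_log hσ_pos,
    nGrp_smul_eq_liftSpan hσ]
  simp only [liftSpan_mul_liftSpan hσ]
  congr 1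
  ext i j
  fin_cases i <;> fin_cases j <;> simp [mul_apply, Fin.sum_univ_three] <;> field_simp <;> ring

/-- the Bruhat-type decomposition `w₀⁻¹ n̄_x = n̄_y m e^{log|x|·H} n_z`
with `y = −|x|⁻²x`, `z = |x|⁻²x`. -/
theorem stmt0 (n : ℕ) (hn : 1 ≤ n) (x : Fin n → ℝ) (hx : x ≠ 0) :
    (w0 n)⁻¹ * nbarGrp n x =
      nbarGrp n (-(eunorm x ^ 2)⁻¹ • x) * mMat n x *
        NormedSpace.exp (Real.log (eunorm x) • Hmat n) *
        nGrp n ((eunorm x ^ 2)⁻¹ • x) :=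
  stmt0_general n x hx
end
end

section
/- Let n ≥ 1 and x ∈ ℝ^n. The map φ : ℝ^n∖{0} → ℝ^n, φ(z) = x − |z|⁻²z, is differentiable, and for every z ≠ 0 the absolute value of the determinant of its derivative Dφ(z) equals |z|^{−2n}. -/
/-! `z ↦ ‖z‖⁻² z` is the inversion in the unit sphere, whose derivative at `z` is `‖z‖⁻²` times
the reflection in the hyperplane `zᗮ`. A reflection has determinant `-1`, so the scalar factor
alone contributes to `|det|`, namely `(‖z‖⁻²)ⁿ`. -/

open EuclideanGeometry Module

section

variable {E : Type*} [NormedAddCommGroup E] [InnerProductSpace ℝ E]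

theorem inversion_zero_one_eq_inv_norm_sq_smul (z : E) :
    inversion (0 : E) 1 z = (‖z‖ ^ 2)⁻¹ • z := by
  simp [inversion_def, dist_eq_norm, one_div, inv_pow]

theorem hasFDerivAt_sub_inv_norm_sq_smul (x : E) {z : E} (hz : z ≠ 0) :
    HasFDerivAt (fun z : E => x - (‖z‖ ^ 2)⁻¹ • z)
      (-((‖z‖ ^ 2)⁻¹ • ((ℝ ∙ z)ᗮ.reflection : E →L[ℝ] E))) z := by
  have hinv := hasFDerivAt_inversion (c := (0 : E)) (R := 1) hz
  simp only [dist_zero_right, sub_zero, one_div, inv_pow] at hinv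
  simp only [← inversion_zero_one_eq_inv_norm_sq_smul]
  exact hinv.const_sub x

theorem det_reflection_orthogonal_span_singleton [FiniteDimensional ℝ E] {z : E} (hz : z ≠ 0) :
    LinearMap.det (((ℝ ∙ z)ᗮ.reflection : E →L[ℝ] E) : E →ₗ[ℝ] E) = -1 := by
  change LinearMap.det (ℝ ∙ z)ᗮ.reflection.toLinearMap = -1
  rw [Submodule.det_reflection, Submodule.orthogonal_orthogonal, finrank_span_singleton hz,
    pow_one]

theorem abs_det_smul_reflection_orthogonal_span_singleton [FiniteDimensional ℝ E] (c : ℝ)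
    {z : E} (hz : z ≠ 0) :
    |LinearMap.det (c • (((ℝ ∙ z)ᗮ.reflection : E →L[ℝ] E) : E →ₗ[ℝ] E))| =
      |c| ^ finrank ℝ E := by
  rw [LinearMap.det_smul, det_reflection_orthogonal_span_singleton hz, abs_mul, abs_pow,
    abs_neg, abs_one, mul_one]

end

theorem stmt1_general (n : ℕ) (x : EuclideanSpace ℝ (Fin n)) :
    ∀ z : EuclideanSpace ℝ (Fin n), z ≠ 0 →
      DifferentiableAt ℝ (fun z : EuclideanSpace ℝ (Fin n) => x - (‖z‖ ^ 2)⁻¹ • z) z ∧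
      |LinearMap.det
          (fderiv ℝ (fun z : EuclideanSpace ℝ (Fin n) => x - (‖z‖ ^ 2)⁻¹ • z) z).toLinearMap| =
        ‖z‖ ^ (-(2 * n : ℤ)) := by
  intro z hz
  have hφ := hasFDerivAt_sub_inv_norm_sq_smul x hz
  refine ⟨hφ.differentiableAt, ?_⟩
  rw [hφ.fderiv, ContinuousLinearMap.toLinearMap_neg,
    ContinuousLinearMap.toLinearMap_smul, ← neg_smul,
    abs_det_smul_reflection_orthogonal_span_singleton _ hz, finrank_euclideanSpace_fin, abs_neg,
    abs_of_nonneg (by positivity), zpow_neg, zpow_mul, zpow_ofNat, zpow_natCast, inv_pow]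

/-- the map `φ(z) = x − |z|⁻²z` is differentiable away from `0` and the absolute
value of the determinant of its derivative at `z ≠ 0` equals `|z|^{−2n}`. -/
theorem stmt1 (n : ℕ) (hn : 1 ≤ n) (x : EuclideanSpace ℝ (Fin n)) :
    ∀ z : EuclideanSpace ℝ (Fin n), z ≠ 0 →
      DifferentiableAt ℝ (fun z : EuclideanSpace ℝ (Fin n) => x - (‖z‖ ^ 2)⁻¹ • z) z ∧
      |LinearMap.det
          (fderiv ℝ (fun z : EuclideanSpace ℝ (Fin n) => x - (‖z‖ ^ 2)⁻¹ • z) z).toLinearMap| =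
        ‖z‖ ^ (-(2 * n : ℤ)) :=
  stmt1_general n x
end

section
/- Let σ, μ ∈ ℂ and let u : (0,∞) → ℂ be twice differentiable. Set v(x) = u(sinh²(x/2)) and β(x) = ((μ−1)/2)·coth(x/2) − ((σ−1)/2)·tanh(x/2). Then for all x > 0: (𝒟_{σ,μ}u)(sinh²(x/2)) = v''(x) + β(x)·v'(x). -/
/-!
Write `v = u ∘ g` with `g(s) = sinh²(s/2)`. Two applications of the chain rule give
`v'' = g'' u'(g) + g'² u''(g)`, with `g' = sinh(s/2) cosh(s/2)` and
`g'' = (cosh²(s/2) + sinh²(s/2))/2`. Since `cosh² = 1 + sinh²`, one has `g'² = t(1+t)` for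
`t = g(x)`, and `g'' + β g'` equals the first-order coefficient `((μ−σ+2)/2) t + μ/2` of `𝒟_{σ,μ}`.
-/

open Real Filter Topology

theorem deriv_deriv_comp {F : Type*} [NormedAddCommGroup F] [NormedSpace ℝ F]
    {u : ℝ → F} {g : ℝ → ℝ} {x : ℝ}
    (hu : ∀ᶠ s in 𝓝 x, DifferentiableAt ℝ u (g s)) (hu' : DifferentiableAt ℝ (deriv u) (g x))
    (hg : ∀ᶠ s in 𝓝 x, DifferentiableAt ℝ g s) (hg' : DifferentiableAt ℝ (deriv g) x) :
    deriv (deriv (u ∘ g)) x =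
      deriv (deriv g) x • deriv u (g x) + deriv g x ^ 2 • deriv (deriv u) (g x) := by
  have hfirst : deriv (u ∘ g) =ᶠ[𝓝 x] fun s => deriv g s • deriv u (g s) := by
    filter_upwards [hu, hg] with s hus hgs
    exact deriv.scomp s hus hgs
  have hsecond : HasDerivAt (fun s => deriv g s • deriv u (g s))
      (deriv g x • deriv g x • deriv (deriv u) (g x) + deriv (deriv g) x • deriv u (g x)) x :=
    hg'.hasDerivAt.smul (hu'.hasDerivAt.scomp x hg.self_of_nhds.hasDerivAt)
  rw [hfirst.deriv_eq, hsecond.deriv, smul_smul, ← sq, add_comm]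

theorem hasDerivAt_sinh_half (x : ℝ) :
    HasDerivAt (fun s => sinh (s / 2)) (cosh (x / 2) / 2) x := by
  simpa [Function.comp_def, div_eq_mul_inv] using
    (hasDerivAt_sinh (x / 2)).comp x ((hasDerivAt_id x).div_const 2)

theorem hasDerivAt_cosh_half (x : ℝ) :
    HasDerivAt (fun s => cosh (s / 2)) (sinh (x / 2) / 2) x := by
  simpa [Function.comp_def, div_eq_mul_inv] using
    (hasDerivAt_cosh (x / 2)).comp x ((hasDerivAt_id x).div_const 2)

theorem deriv_sinh_half_sq :
    deriv (fun s => sinh (s / 2) ^ 2) = fun x => sinh (x / 2) * cosh (x / 2) := by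
  funext x
  exact ((hasDerivAt_sinh_half x).fun_pow 2).deriv.trans (by ring)

theorem deriv_sinh_half_mul_cosh_half (x : ℝ) :
    deriv (fun s => sinh (s / 2) * cosh (s / 2)) x = (cosh (x / 2) ^ 2 + sinh (x / 2) ^ 2) / 2 :=
  ((hasDerivAt_sinh_half x).fun_mul (hasDerivAt_cosh_half x)).deriv.trans (by ring)

theorem sinh_sq_mul_one_add_sinh_sq (y : ℝ) :
    sinh y ^ 2 * (1 + sinh y ^ 2) = (sinh y * cosh y) ^ 2 := by
  rw [mul_pow, cosh_sq']

theorem sinh_sq_affine_coeff_eq (σ μ : ℂ) {y : ℝ} (hy : sinh y ≠ 0) :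
    (μ - σ + 2) / 2 * ((sinh y ^ 2 : ℝ) : ℂ) + μ / 2 =
      (((cosh y ^ 2 + sinh y ^ 2) / 2 : ℝ) : ℂ) +
        ((μ - 1) / 2 * ((tanh y : ℝ) : ℂ)⁻¹ - (σ - 1) / 2 * ((tanh y : ℝ) : ℂ)) *
          ((sinh y * cosh y : ℝ) : ℂ) := by
  have hS : (sinh y : ℂ) ≠ 0 := by exact_mod_cast hy
  have hC : (cosh y : ℂ) ≠ 0 := by exact_mod_cast (cosh_pos y).ne'
  have hC2 : (cosh y : ℂ) ^ 2 = 1 + (sinh y : ℂ) ^ 2 := by exact_mod_cast cosh_sq' y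
  rw [tanh_eq_sinh_div_cosh]
  generalize sinh y = S, cosh y = C at *
  push_cast
  field_simp
  linear_combination (-μ) * hC2

/-- under the substitution `t = sinh²(x/2)`, the operator
`𝒟_{σ,μ}u(t) = t(1+t)u'' + (((μ−σ+2)/2)t + μ/2)u'` becomes `v'' + β v'` with
`v(x) = u(sinh²(x/2))` and `β(x) = ((μ−1)/2)coth(x/2) − ((σ−1)/2)tanh(x/2)`. -/
theorem stmt6 (σ μ : ℂ) (u : ℝ → ℂ)
    (hu : ∀ t : ℝ, 0 < t → DifferentiableAt ℝ u t ∧ DifferentiableAt ℝ (deriv u) t) :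
    ∀ x : ℝ, 0 < x →
      ((Real.sinh (x / 2) ^ 2 : ℝ) : ℂ) * (1 + ((Real.sinh (x / 2) ^ 2 : ℝ) : ℂ)) *
          deriv (deriv u) (Real.sinh (x / 2) ^ 2) +
        ((μ - σ + 2) / 2 * ((Real.sinh (x / 2) ^ 2 : ℝ) : ℂ) + μ / 2) *
          deriv u (Real.sinh (x / 2) ^ 2) =
      deriv (deriv (fun s : ℝ => u (Real.sinh (s / 2) ^ 2))) x +
        (((μ - 1) / 2) * ((Real.tanh (x / 2) : ℝ) : ℂ)⁻¹ -
            ((σ - 1) / 2) * ((Real.tanh (x / 2) : ℝ) : ℂ)) *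
          deriv (fun s : ℝ => u (Real.sinh (s / 2) ^ 2)) x := by
  intro x hx
  have hsinh : ∀ s : ℝ, 0 < s → 0 < sinh (s / 2) ^ 2 := fun s hs =>
    pow_pos (sinh_pos_iff.2 (half_pos hs)) 2
  have hg : ∀ s, DifferentiableAt ℝ (fun s => sinh (s / 2) ^ 2) s := fun s =>
    ((hasDerivAt_sinh_half s).fun_pow 2).differentiableAt
  have hu_near : ∀ᶠ s in 𝓝 x, DifferentiableAt ℝ u (sinh (s / 2) ^ 2) := by
    filter_upwards [eventually_gt_nhds hx] with s hs
    exact (hu _ (hsinh s hs)).1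
  have hg' : DifferentiableAt ℝ (fun s => sinh (s / 2) * cosh (s / 2)) x :=
    ((hasDerivAt_sinh_half x).fun_mul (hasDerivAt_cosh_half x)).differentiableAt
  change _ = deriv (deriv (u ∘ fun s => sinh (s / 2) ^ 2)) x + _ * deriv (u ∘ _) x
  rw [deriv_deriv_comp hu_near (hu _ (hsinh x hx)).2 (.of_forall hg) (deriv_sinh_half_sq ▸ hg'),
    deriv.scomp x (hu _ (hsinh x hx)).1 (hg x), deriv_sinh_half_sq,
    deriv_sinh_half_mul_cosh_half, sinh_sq_affine_coeff_eq σ μ (sinh_pos_iff.2 (half_pos hx)).ne',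
    ← sinh_sq_mul_one_add_sinh_sq]
  simp only [Complex.real_smul]
  push_cast
  ring
end

section
/- Let n ≥ 1, let d ∈ ℕ with 2d+n−2 ≠ 0, let 1 ≤ j ≤ n, and let p be a harmonic polynomial on ℝ^n homogeneous of degree d. Then x_j·p(x) = p_j⁺(x) + |x|²·p_j⁻(x) for all x, where p_j⁺(x) = x_j p(x) − (|x|²/(2d+n−2)) ∂p/∂x_j(x) is a harmonic polynomial homogeneous of degree d+1 and p_j⁻(x) = (1/(2d+n−2)) ∂p/∂x_j(x) is a harmonic polynomial homogeneous of degree d−1 (the zero polynomial if d = 0). -/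
/-!
For harmonic `p`, the product rule gives `Δ (x_j p) = 2 ∂_j p`, and for a harmonic `q` homogeneous
of degree `e` it gives, with Euler's identity `∑ x_i ∂_i q = e q`,
`Δ (|x|² q) = (2 n + 4 e) q`. Taking `q = ∂_j p`, which is harmonic of degree `d - 1`, yields
`Δ (|x|² ∂_j p) = 2 (2 d + n - 2) ∂_j p`, so subtracting `|x|² ∂_j p / (2 d + n - 2)` from
`x_j p` leaves a harmonic polynomial.
-/

open MvPolynomial

namespace MvPolynomial

variable {R σ : Type*}

section CommSemiring

variable [CommSemiring R]

theorem pderiv_pderiv_comm (i k : σ) (p : MvPolynomial σ R) :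
    pderiv i (pderiv k p) = pderiv k (pderiv i p) := by
  rcases eq_or_ne i k with rfl | hik
  · rfl
  ext m
  simp only [coeff_pderiv, Finsupp.add_apply, Finsupp.single_eq_of_ne hik,
    Finsupp.single_eq_of_ne hik.symm, add_zero, add_right_comm m]
  ring

theorem pderiv_eq_zero_of_isHomogeneous_zero {p : MvPolynomial σ R} (hp : p.IsHomogeneous 0)
    (i : σ) : pderiv i p = 0 := by
  rw [← totalDegree_zero_iff_isHomogeneous, totalDegree_eq_zero_iff_eq_C] at hp
  rw [hp, pderiv_C]

variable [Fintype σ]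

noncomputable def laplacian : MvPolynomial σ R →ₗ[R] MvPolynomial σ R :=
  ∑ i, (pderiv i).toLinearMap ∘ₗ (pderiv i).toLinearMap

theorem laplacian_apply (p : MvPolynomial σ R) :
    laplacian p = ∑ i, pderiv i (pderiv i p) := by
  simp [laplacian]

theorem laplacian_pderiv (j : σ) (p : MvPolynomial σ R) :
    laplacian (pderiv j p) = pderiv j (laplacian p) := by
  simp only [laplacian_apply, map_sum, pderiv_pderiv_comm j]

theorem laplacian_X_mul (j : σ) (p : MvPolynomial σ R) :
    laplacian (X j * p) = 2 * pderiv j p + X j * laplacian p := by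
  classical
  have h (i : σ) : pderiv i (pderiv i (X j * p)) =
      (if i = j then 2 * pderiv j p else 0) + X j * pderiv i (pderiv i p) := by
    rcases eq_or_ne i j with rfl | hij
    · simp only [pderiv_mul, map_add, pderiv_X_self, pderiv_one, if_true]
      ring
    · simp only [pderiv_mul, map_add, pderiv_X_of_ne hij.symm, map_zero, hij, if_false]
      ring
  simp only [laplacian_apply, h, Finset.sum_add_distrib, Finset.sum_ite_eq', Finset.mem_univ,
    if_true, ← Finset.mul_sum]

theorem pderiv_sum_X_sq (i : σ) :
    pderiv i (∑ k, X k ^ 2 : MvPolynomial σ R) = 2 * X i := by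
  classical
  simp [pderiv_X, Pi.single_apply]

theorem laplacian_sum_X_sq_mul (q : MvPolynomial σ R) :
    laplacian ((∑ i, X i ^ 2) * q) =
      (2 * Fintype.card σ) • q + 4 • ∑ i, X i * pderiv i q + (∑ i, X i ^ 2) * laplacian q := by
  have h (i : σ) : pderiv i (pderiv i ((∑ k, X k ^ 2) * q)) =
      2 • q + 4 • (X i * pderiv i q) + (∑ k, X k ^ 2) * pderiv i (pderiv i q) := by
    have h2 : pderiv i (2 : MvPolynomial σ R) = 0 := by exact_mod_cast (pderiv i).map_natCast 2
    simp only [pderiv_mul, map_add, pderiv_sum_X_sq, pderiv_X_self, h2, zero_mul, zero_add,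
      nsmul_eq_mul]
    push_cast
    ring
  simp only [laplacian_apply, h, Finset.sum_add_distrib, ← Finset.mul_sum, ← Finset.smul_sum]
  simp [mul_smul]

theorem IsHomogeneous.laplacian_sum_X_sq_mul {q : MvPolynomial σ R} {e : ℕ}
    (hq : q.IsHomogeneous e) :
    laplacian ((∑ i, X i ^ 2) * q) =
      (2 * Fintype.card σ + 4 * e) • q + (∑ i, X i ^ 2) * laplacian q := by
  rw [MvPolynomial.laplacian_sum_X_sq_mul, hq.sum_X_mul_pderiv, smul_smul, ← add_smul]

end CommSemiring

variable [Fintype σ]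

theorem IsHomogeneous.X_mul_sub_C_mul_sum_X_sq_mul_pderiv [CommRing R] {p : MvPolynomial σ R}
    {d : ℕ} (hp : p.IsHomogeneous d) (c : R) (j : σ) :
    (X j * p - C c * (∑ i, X i ^ 2) * pderiv j p).IsHomogeneous (d + 1) := by
  have hXp : (X j * p).IsHomogeneous (d + 1) := by
    simpa [add_comm] using (isHomogeneous_X R j).mul hp
  have hSq : ((∑ i, X i ^ 2) * pderiv j p).IsHomogeneous (d + 1) := by
    cases d with
    | zero => simp [pderiv_eq_zero_of_isHomogeneous_zero hp, isHomogeneous_zero]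
    | succ k =>
      have hS : (∑ i, X i ^ 2 : MvPolynomial σ R).IsHomogeneous 2 :=
        IsHomogeneous.sum _ _ _ fun i _ => isHomogeneous_X_pow i 2
      convert hS.mul (hp.pderiv (i := j)) using 1
      omega
  rw [mul_assoc]
  exact hXp.sub (hSq.C_mul c)

/-- For `d = 0` both sides vanish; otherwise `pderiv j p` is harmonic of degree `d - 1`, and
`2 n + 4 (d - 1) = 2 (2 d + n - 2)`. -/
theorem IsHomogeneous.laplacian_sum_X_sq_mul_pderiv [CommRing R] {p : MvPolynomial σ R} {d : ℕ}
    (hp : p.IsHomogeneous d) (hΔ : laplacian p = 0) (j : σ) :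
    laplacian ((∑ i, X i ^ 2) * pderiv j p) =
      (2 * (2 * d + Fintype.card σ - 2) : R) • pderiv j p := by
  cases d with
  | zero => simp [pderiv_eq_zero_of_isHomogeneous_zero hp]
  | succ k =>
    rw [hp.pderiv.laplacian_sum_X_sq_mul, laplacian_pderiv, hΔ, map_zero, mul_zero, add_zero,
      ← Nat.cast_smul_eq_nsmul R]
    congr 1
    push_cast
    ring

theorem IsHomogeneous.laplacian_X_mul_sub_C_mul_sum_X_sq_mul_pderiv [Field R]
    {p : MvPolynomial σ R} {d : ℕ} (hp : p.IsHomogeneous d) (hΔ : laplacian p = 0)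
    (hd : 2 * (d : R) + Fintype.card σ - 2 ≠ 0) (j : σ) :
    laplacian (X j * p - C (2 * (d : R) + Fintype.card σ - 2)⁻¹ * (∑ i, X i ^ 2) * pderiv j p)
      = 0 := by
  rw [map_sub, mul_assoc, C_mul', map_smul, laplacian_X_mul, hΔ, mul_zero, add_zero,
    hp.laplacian_sum_X_sq_mul_pderiv hΔ, smul_smul, mul_left_comm, inv_mul_cancel₀ hd, mul_one,
    ofNat_smul_eq_nsmul, two_nsmul, two_mul, sub_self]

end MvPolynomial

theorem stmt11_general (n : ℕ) (d : ℕ) (hd : 2 * (d : ℝ) + (n : ℝ) - 2 ≠ 0) (j : Fin n)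
    (p : MvPolynomial (Fin n) ℝ)
    (hharm : (∑ i, pderiv i (pderiv i p)) = 0)
    (hhom : p.IsHomogeneous d) :
    X j * p =
        (X j * p - C ((2 * (d : ℝ) + (n : ℝ) - 2)⁻¹) * (∑ i, X i ^ 2) * pderiv j p) +
          (∑ i, X i ^ 2) * (C ((2 * (d : ℝ) + (n : ℝ) - 2)⁻¹) * pderiv j p) ∧
      (∑ i, pderiv i (pderiv i
        (X j * p - C ((2 * (d : ℝ) + (n : ℝ) - 2)⁻¹) * (∑ i, X i ^ 2) * pderiv j p))) = 0 ∧
      (X j * p - C ((2 * (d : ℝ) + (n : ℝ) - 2)⁻¹) * (∑ i, X i ^ 2) *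
        pderiv j p).IsHomogeneous (d + 1) ∧
      (∑ i, pderiv i (pderiv i (C ((2 * (d : ℝ) + (n : ℝ) - 2)⁻¹) * pderiv j p))) = 0 ∧
      (C ((2 * (d : ℝ) + (n : ℝ) - 2)⁻¹) * pderiv j p).IsHomogeneous (d - 1) ∧
      (d = 0 → C ((2 * (d : ℝ) + (n : ℝ) - 2)⁻¹) * pderiv j p = 0) := by
  rw [← laplacian_apply] at hharm
  simp only [← laplacian_apply]
  refine ⟨by ring, ?_, ?_, ?_, hhom.pderiv.C_mul _, ?_⟩
  · simpa only [Fintype.card_fin] using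
      hhom.laplacian_X_mul_sub_C_mul_sum_X_sq_mul_pderiv hharm (by rwa [Fintype.card_fin]) j
  · exact hhom.X_mul_sub_C_mul_sum_X_sq_mul_pderiv _ j
  · rw [C_mul', map_smul, laplacian_pderiv, hharm, map_zero, smul_zero]
  · rintro rfl
    rw [pderiv_eq_zero_of_isHomogeneous_zero hhom, mul_zero]

/-- decomposition `x_j p = p_j⁺ + |x|² p_j⁻` of the product of a coordinate with a
harmonic homogeneous polynomial into harmonic homogeneous parts. -/
theorem stmt11 (n : ℕ) (hn : 1 ≤ n) (d : ℕ) (hd : 2 * (d : ℝ) + (n : ℝ) - 2 ≠ 0) (j : Fin n)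
    (p : MvPolynomial (Fin n) ℝ)
    (hharm : (∑ i, pderiv i (pderiv i p)) = 0)
    (hhom : p.IsHomogeneous d) :
    X j * p =
        (X j * p - C ((2 * (d : ℝ) + (n : ℝ) - 2)⁻¹) * (∑ i, X i ^ 2) * pderiv j p) +
          (∑ i, X i ^ 2) * (C ((2 * (d : ℝ) + (n : ℝ) - 2)⁻¹) * pderiv j p) ∧
      (∑ i, pderiv i (pderiv i
        (X j * p - C ((2 * (d : ℝ) + (n : ℝ) - 2)⁻¹) * (∑ i, X i ^ 2) * pderiv j p))) = 0 ∧
      (X j * p - C ((2 * (d : ℝ) + (n : ℝ) - 2)⁻¹) * (∑ i, X i ^ 2) *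
        pderiv j p).IsHomogeneous (d + 1) ∧
      (∑ i, pderiv i (pderiv i (C ((2 * (d : ℝ) + (n : ℝ) - 2)⁻¹) * pderiv j p))) = 0 ∧
      (C ((2 * (d : ℝ) + (n : ℝ) - 2)⁻¹) * pderiv j p).IsHomogeneous (d - 1) ∧
      (d = 0 → C ((2 * (d : ℝ) + (n : ℝ) - 2)⁻¹) * pderiv j p = 0) :=
  stmt11_general n d hd j p hharm hhom
end
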